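/- arXiv:1412.2868 — 5 statements merged into one kernel-verified Lean document; each statement's English description precedes it below -/
import Mathlib

section
/- If a group A is the union of three proper subgroups A₁, A₂, A₃, then each Aᵢ has index 2 in A. -/
/-! A group is never the union of two proper subgroups, so each of the three subgroups contains an
element lying in neither of the others; multiplying by such an element shows that the
intersection of any two of them lies in the third. Hence an element outside `A₁` lies in exactly
one of `A₂`, `A₃`. For `x ∈ A₂` and `y ∈ A₃` outside `A₁`, the element `x⁻¹ * y` can lie in
neither `A₂` nor `A₃`, so it lies in `A₁`; two elements of the same kind are compared through an
element of the other kind. So the complement of `A₁` is a single coset. -/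

namespace Subgroup

variable {G : Type*} [Group G] {H K L : Subgroup G}

theorem exists_notMem_notMem_of_ne_top (hH : H ≠ ⊤) (hK : K ≠ ⊤) : ∃ g, g ∉ H ∧ g ∉ K := by
  by_contra! h
  have hsub : ((⊤ : Subgroup G) : Set G) ⊆ H ∪ K := fun g _ ↦ or_iff_not_imp_left.2 (h g)
  rcases SubgroupClass.subset_union.1 hsub with hle | hle
  · exact hH (top_le_iff.1 hle)
  · exact hK (top_le_iff.1 hle)

theorem exists_mem_notMem_notMem_of_cover (hcover : ∀ g, g ∈ H ∨ g ∈ K ∨ g ∈ L)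
    (hK : K ≠ ⊤) (hL : L ≠ ⊤) :
    ∃ a ∈ H, a ∉ K ∧ a ∉ L := by
  by_contra! h
  obtain ⟨g, hgK, hgL⟩ := exists_notMem_notMem_of_ne_top hK hL
  rcases hcover g with hgH | hgK' | hgL'
  · exact hgL (h g hgH hgK)
  · exact hgK hgK'
  · exact hgL hgL'

theorem inf_le_of_cover (hcover : ∀ g, g ∈ H ∨ g ∈ K ∨ g ∈ L) (hK : K ≠ ⊤) (hL : L ≠ ⊤) :
    K ⊓ L ≤ H := by
  obtain ⟨a, haH, haK, haL⟩ := exists_mem_notMem_notMem_of_cover hcover hK hL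
  intro x hx
  obtain ⟨hxK, hxL⟩ := mem_inf.1 hx
  rcases hcover (x * a) with h | h | h
  · exact (mul_mem_cancel_right haH).1 h
  · exact absurd ((mul_mem_cancel_left hxK).1 h) haK
  · exact absurd ((mul_mem_cancel_left hxL).1 h) haL

theorem inv_mul_mem_of_cover_of_mem_of_mem (hcover : ∀ g, g ∈ H ∨ g ∈ K ∨ g ∈ L) {x y : G}
    (hxK : x ∈ K) (hxL : x ∉ L) (hyL : y ∈ L) (hyK : y ∉ K) : x⁻¹ * y ∈ H := by
  rcases hcover (x⁻¹ * y) with h | h | h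
  · exact h
  · exact absurd ((mul_mem_cancel_left (inv_mem hxK)).1 h) hyK
  · exact absurd (inv_mem_iff.1 ((mul_mem_cancel_right hyL).1 h)) hxL

theorem inv_mul_mem_of_cover_of_notMem (hcover : ∀ g, g ∈ H ∨ g ∈ K ∨ g ∈ L)
    (hH : H ≠ ⊤) (hK : K ≠ ⊤) (hL : L ≠ ⊤) {x y : G}
    (hxK : x ∈ K) (hxH : x ∉ H) (hyH : y ∉ H) : x⁻¹ * y ∈ H := by
  have hKL := inf_le_of_cover hcover hK hL
  have hxL : x ∉ L := fun hxL ↦ hxH (hKL ⟨hxK, hxL⟩)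
  rcases (hcover y).resolve_left hyH with hyK | hyL
  · have hyL : y ∉ L := fun hyL ↦ hyH (hKL ⟨hyK, hyL⟩)
    obtain ⟨z, hzL, -, hzK⟩ :=
      exists_mem_notMem_notMem_of_cover (fun g ↦ (hcover g).rotate.rotate) hH hK
    have hxz := inv_mul_mem_of_cover_of_mem_of_mem hcover hxK hxL hzL hzK
    have hyz := inv_mul_mem_of_cover_of_mem_of_mem hcover hyK hyL hzL hzK
    rw [show x⁻¹ * y = (x⁻¹ * z) * (y⁻¹ * z)⁻¹ by group]
    exact mul_mem hxz (inv_mem hyz)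
  · exact inv_mul_mem_of_cover_of_mem_of_mem hcover hxK hxL hyL fun hyK ↦ hyH (hKL ⟨hyK, hyL⟩)

theorem index_eq_two_of_cover (hcover : ∀ g, g ∈ H ∨ g ∈ K ∨ g ∈ L)
    (hH : H ≠ ⊤) (hK : K ≠ ⊤) (hL : L ≠ ⊤) : H.index = 2 := by
  obtain ⟨c, hc⟩ := SetLike.exists_not_mem_of_ne_top H hH
  refine index_eq_two_iff_exists_notMem_and'.2
    ⟨c⁻¹, inv_mem_iff.not.2 hc, fun b ↦ or_iff_not_imp_right.2 fun hb ↦ ?_⟩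
  rcases (hcover c).resolve_left hc with hcK | hcL
  · exact inv_mul_mem_of_cover_of_notMem hcover hH hK hL hcK hc hb
  · exact inv_mul_mem_of_cover_of_notMem (fun g ↦ (hcover g).imp_right Or.symm) hH hL hK
      hcL hc hb

end Subgroup

theorem stmt_1 {A : Type*} [Group A] (A₁ A₂ A₃ : Subgroup A)
    (h1 : A₁ ≠ ⊤) (h2 : A₂ ≠ ⊤) (h3 : A₃ ≠ ⊤)
    (hcover : (A₁ : Set A) ∪ (A₂ : Set A) ∪ (A₃ : Set A) = Set.univ) :
    A₁.index = 2 ∧ A₂.index = 2 ∧ A₃.index = 2 := by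
  have hmem : ∀ g, g ∈ A₁ ∨ g ∈ A₂ ∨ g ∈ A₃ := fun g ↦ by
    simpa [or_assoc] using hcover.ge (Set.mem_univ g)
  exact ⟨Subgroup.index_eq_two_of_cover hmem h1 h2 h3,
    Subgroup.index_eq_two_of_cover (fun g ↦ (hmem g).rotate) h2 h3 h1,
    Subgroup.index_eq_two_of_cover (fun g ↦ (hmem g).rotate.rotate) h3 h1 h2⟩
end

section
/- If a group A is the union of three proper subgroups A₁, A₂, A₃, then A₁ ∩ A₂ = A₁ ∩ A₃ = A₂ ∩ A₃, this common intersection is a normal subgroup of A, and the quotient A/(A₁ ∩ A₂) is isomorphic to the Klein four-group. -/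
/-!
A group is never the union of two proper subgroups, so each of the three subgroups contains an
element lying in neither of the others. Multiplying such elements shows that the intersection of
any two of the subgroups lies in the third, and that the product of two elements outside one of
them lies inside it, so that each has index 2. Two distinct subgroups of index 2 meet in a normal
subgroup of index 4 whose quotient has exponent 2, i.e. in the kernel of a map onto the Klein
four-group.
-/

namespace Subgroup

variable {G : Type*} [Group G] {H K L : Subgroup G}

theorem exists_mem_notMem_notMem_of_forall_mem_or (hcov : ∀ x, x ∈ H ∨ x ∈ K ∨ x ∈ L)
    (hK : K ≠ ⊤) (hL : L ≠ ⊤) : ∃ a ∈ H, a ∉ K ∧ a ∉ L := by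
  by_contra! h
  have hKL : ((⊤ : Subgroup G) : Set G) ⊆ K ∪ L := fun x _ ↦
    (hcov x).elim (fun hxH ↦ (em (x ∈ K)).imp id (h x hxH)) id
  rcases SubgroupClass.subset_union.1 hKL with hK' | hL'
  · exact hK (top_le_iff.1 hK')
  · exact hL (top_le_iff.1 hL')

theorem inf_le_of_forall_mem_or (hcov : ∀ x, x ∈ H ∨ x ∈ K ∨ x ∈ L)
    (hH : H ≠ ⊤) (hK : K ≠ ⊤) (hL : L ≠ ⊤) : H ⊓ K ≤ L := by
  obtain ⟨a, haH, haK, -⟩ := exists_mem_notMem_notMem_of_forall_mem_or hcov hK hL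
  obtain ⟨b, hbK, hbH, -⟩ :=
    exists_mem_notMem_notMem_of_forall_mem_or (fun x ↦ or_left_comm.1 (hcov x)) hH hL
  intro x ⟨hxH, hxK⟩
  have habH : a * b ∉ H := (H.mul_mem_cancel_left haH).not.2 hbH
  have habK : a * b ∉ K := (K.mul_mem_cancel_right hbK).not.2 haK
  have habxH : a * b * x ∉ H := (H.mul_mem_cancel_right hxH).not.2 habH
  have habxK : a * b * x ∉ K := by
    rw [mul_assoc]; exact (K.mul_mem_cancel_right (K.mul_mem hbK hxK)).not.2 haK
  have habL : a * b ∈ L := ((hcov _).resolve_left habH).resolve_left habK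
  have habxL : a * b * x ∈ L := ((hcov _).resolve_left habxH).resolve_left habxK
  exact (L.mul_mem_cancel_left habL).1 habxL

theorem mul_mem_of_mem_diff_of_mem_diff (hcov : ∀ x, x ∈ H ∨ x ∈ K ∨ x ∈ L) (hKL : K ⊓ L ≤ H)
    {x y : G} (hxK : x ∈ K) (hxH : x ∉ H) (hyL : y ∈ L) (hyH : y ∉ H) : x * y ∈ H := by
  have hxL : x ∉ L := fun hxL ↦ hxH (hKL ⟨hxK, hxL⟩)
  have hyK : y ∉ K := fun hyK ↦ hyH (hKL ⟨hyK, hyL⟩)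
  have hxyK : x * y ∉ K := (K.mul_mem_cancel_left hxK).not.2 hyK
  have hxyL : x * y ∉ L := (L.mul_mem_cancel_right hyL).not.2 hxL
  exact (hcov _).resolve_right (not_or.2 ⟨hxyK, hxyL⟩)

theorem mul_mem_of_mem_diff_of_mem_diff_same (hcov : ∀ x, x ∈ H ∨ x ∈ K ∨ x ∈ L)
    (hH : H ≠ ⊤) (hK : K ≠ ⊤) (hKL : K ⊓ L ≤ H) {x y : G}
    (hxK : x ∈ K) (hxH : x ∉ H) (hyK : y ∈ K) (hyH : y ∉ H) : x * y ∈ H := by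
  obtain ⟨c, hcL, hcH, -⟩ :=
    exists_mem_notMem_notMem_of_forall_mem_or (fun x ↦ or_rotate.1 (or_rotate.1 (hcov x))) hH hK
  have hxc : x * c ∈ H := mul_mem_of_mem_diff_of_mem_diff hcov hKL hxK hxH hcL hcH
  have hcy : c⁻¹ * y ∈ H :=
    mul_mem_of_mem_diff_of_mem_diff (fun x ↦ (hcov x).imp_right Or.symm) (inf_comm K L ▸ hKL)
      (L.inv_mem hcL) (H.inv_mem_iff.not.2 hcH) hyK hyH
  simpa [mul_assoc] using H.mul_mem hxc hcy

theorem mul_mem_of_notMem_of_forall_mem_or (hcov : ∀ x, x ∈ H ∨ x ∈ K ∨ x ∈ L)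
    (hH : H ≠ ⊤) (hK : K ≠ ⊤) (hL : L ≠ ⊤) {x y : G} (hx : x ∉ H) (hy : y ∉ H) :
    x * y ∈ H := by
  have hcov' : ∀ x, x ∈ H ∨ x ∈ L ∨ x ∈ K := fun x ↦ (hcov x).imp_right Or.symm
  have hKL : K ⊓ L ≤ H := inf_le_of_forall_mem_or (fun x ↦ or_rotate.1 (hcov x)) hK hL hH
  have hLK : L ⊓ K ≤ H := inf_comm K L ▸ hKL
  rcases (hcov x).resolve_left hx with hxK | hxL <;>
    rcases (hcov y).resolve_left hy with hyK | hyL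
  · exact mul_mem_of_mem_diff_of_mem_diff_same hcov hH hK hKL hxK hx hyK hy
  · exact mul_mem_of_mem_diff_of_mem_diff hcov hKL hxK hx hyL hy
  · exact mul_mem_of_mem_diff_of_mem_diff hcov' hLK hxL hx hyK hy
  · exact mul_mem_of_mem_diff_of_mem_diff_same hcov' hH hL hLK hxL hx hyL hy

theorem index_eq_two_of_forall_mem_or (hcov : ∀ x, x ∈ H ∨ x ∈ K ∨ x ∈ L)
    (hH : H ≠ ⊤) (hK : K ≠ ⊤) (hL : L ≠ ⊤) : H.index = 2 := by
  obtain ⟨a, haH⟩ := SetLike.exists_not_mem_of_ne_top H hH rfl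
  refine index_eq_two_iff_exists_notMem_and.2 ⟨a, haH, fun b ↦ ?_⟩
  by_cases hb : b ∈ H
  · exact Or.inr hb
  · exact Or.inl (mul_mem_of_notMem_of_forall_mem_or hcov hH hK hL hb haH)

theorem eq_of_le_of_index_eq_two (hHK : H ≤ K) (hH : H.index = 2) (hK : K.index = 2) : H = K := by
  have := relIndex_mul_index hHK
  rw [hH, hK] at this
  exact le_antisymm hHK (relIndex_eq_one.1 (by omega))

theorem index_inf_eq_four (hH : H.index = 2) (hK : K.index = 2) (hHK : H ≠ K) :
    (H ⊓ K).index = 4 := by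
  have := normal_of_index_eq_two hK
  have hdvd : K.relIndex H ∣ 2 := hK ▸ relIndex_dvd_index_of_normal K H
  have hne : K.relIndex H ≠ 1 :=
    fun h ↦ hHK (eq_of_le_of_index_eq_two (relIndex_eq_one.1 h) hH hK)
  have htwo : K.relIndex H = 2 := ((Nat.dvd_prime Nat.prime_two).1 hdvd).resolve_left hne
  rw [← relIndex_mul_index inf_le_left, inf_relIndex_left, htwo, hH]

theorem isKleinFour_quotient_inf (hH : H.index = 2) (hK : K.index = 2) (hHK : H ≠ K)
    [(H ⊓ K).Normal] : IsKleinFour (G ⧸ H ⊓ K) := by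
  have hcard : Nat.card (G ⧸ H ⊓ K) = 4 := index_inf_eq_four hH hK hHK
  have hsq : ∀ g : G ⧸ H ⊓ K, g ^ 2 = 1 := fun g ↦ by
    induction g using QuotientGroup.induction_on with
    | H g =>
      exact (QuotientGroup.eq_one_iff _).2 ⟨sq_mem_of_index_two hH g, sq_mem_of_index_two hK g⟩
  refine ⟨hcard, ((Nat.dvd_prime Nat.prime_two).1
    (Monoid.exponent_dvd_iff_forall_pow_eq_one.2 hsq)).resolve_left fun h ↦ ?_⟩
  have := Monoid.exp_eq_one_iff.1 h
  simp at hcard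

end Subgroup

theorem stmt_2 {A : Type*} [Group A] (A₁ A₂ A₃ : Subgroup A)
    (h1 : A₁ ≠ ⊤) (h2 : A₂ ≠ ⊤) (h3 : A₃ ≠ ⊤)
    (hcover : (A₁ : Set A) ∪ (A₂ : Set A) ∪ (A₃ : Set A) = Set.univ) :
    A₁ ⊓ A₂ = A₁ ⊓ A₃ ∧ A₁ ⊓ A₂ = A₂ ⊓ A₃ ∧
    ∃ hn : (A₁ ⊓ A₂).Normal,
      Nonempty (letI := hn; (A ⧸ (A₁ ⊓ A₂)) ≃* Multiplicative (ZMod 2 × ZMod 2)) := by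
  have hcov : ∀ x, x ∈ A₁ ∨ x ∈ A₂ ∨ x ∈ A₃ := fun x ↦ by
    simpa [or_assoc] using hcover.ge (Set.mem_univ x)
  have h12 : A₁ ⊓ A₂ ≤ A₃ := Subgroup.inf_le_of_forall_mem_or hcov h1 h2 h3
  have h13 : A₁ ⊓ A₃ ≤ A₂ :=
    Subgroup.inf_le_of_forall_mem_or (fun x ↦ (hcov x).imp_right Or.symm) h1 h3 h2
  have h23 : A₂ ⊓ A₃ ≤ A₁ :=
    Subgroup.inf_le_of_forall_mem_or (fun x ↦ or_rotate.1 (hcov x)) h2 h3 h1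
  have hA₁ : A₁.index = 2 := Subgroup.index_eq_two_of_forall_mem_or hcov h1 h2 h3
  have hA₂ : A₂.index = 2 :=
    Subgroup.index_eq_two_of_forall_mem_or (fun x ↦ or_left_comm.1 (hcov x)) h2 h1 h3
  obtain ⟨a, haA₁, haA₂, -⟩ := Subgroup.exists_mem_notMem_notMem_of_forall_mem_or hcov h2 h3
  have := Subgroup.normal_of_index_eq_two hA₁
  have := Subgroup.normal_of_index_eq_two hA₂
  have := Subgroup.isKleinFour_quotient_inf hA₁ hA₂ fun h ↦ haA₂ (h ▸ haA₁)
  refine ⟨le_antisymm (le_inf inf_le_left h12) (le_inf inf_le_left h13),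
    le_antisymm (le_inf inf_le_right h12) (le_inf h23 inf_le_left), inferInstance,
    IsKleinFour.nonempty_mulEquiv⟩
end

section
/- Let O be an integrally closed domain with fraction field K and r integral over O with [K(r) : K] = 2. If q is integral over O with O[q] = O[r], and q = a₀ + a₁ r with a₀, a₁ ∈ O, then a₁ is a unit of O. -/
/-!
Every element of `O[a₀ + a₁ r]` lies in `O + a₁ O[r]`, and `O[r] = O + O r` because over the
integrally closed `O` the minimal polynomial of `r` has degree `[K(r) : K] = 2`. Hence
`r ∈ O[q]` gives `r = c + a₁ (d₀ + d₁ r)`; as `1, r` are linearly independent over `K`,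
`a₁ d₁ = 1`.
-/

open Polynomial IntermediateField

theorem exists_eq_algebraMap_add_mul_of_mem_adjoin_add_mul {R A : Type*} [CommRing R]
    [CommRing A] [Algebra R A] {x y : A} (a₀ a₁ : R)
    (hy : y ∈ Algebra.adjoin R {algebraMap R A a₀ + algebraMap R A a₁ * x}) :
    ∃ c : R, ∃ z ∈ Algebra.adjoin R {x}, y = algebraMap R A c + algebraMap R A a₁ * z := by
  have hx : x ∈ Algebra.adjoin R {x} := Algebra.self_mem_adjoin_singleton R x
  induction hy using Algebra.adjoin_induction with
  | mem y hy =>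
    rw [Set.mem_singleton_iff.mp hy]
    exact ⟨a₀, x, hx, rfl⟩
  | algebraMap c => exact ⟨c, 0, zero_mem _, by simp⟩
  | add y y' _ _ ih ih' =>
    obtain ⟨c, z, hz, rfl⟩ := ih
    obtain ⟨c', z', hz', rfl⟩ := ih'
    exact ⟨c + c', z + z', add_mem hz hz', by simp only [map_add]; ring⟩
  | mul y y' _ _ ih ih' =>
    obtain ⟨c, z, hz, rfl⟩ := ih
    obtain ⟨c', z', hz', rfl⟩ := ih'
    refine ⟨c * c', algebraMap R A c * z' + algebraMap R A c' * z + algebraMap R A a₁ * z * z',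
      ?_, by simp only [map_mul]; ring⟩
    have hR := Subalgebra.algebraMap_mem (Algebra.adjoin R {x})
    exact add_mem (add_mem (mul_mem (hR c) hz') (mul_mem (hR c') hz))
      (mul_mem (mul_mem (hR a₁) hz) hz')

theorem exists_eq_algebraMap_add_mul_of_mem_adjoin {R A : Type*} [CommRing R] [CommRing A]
    [Algebra R A] {x z : A} {p : R[X]} (hp : p.Monic) (hdeg : p.natDegree = 2)
    (hpx : aeval x p = 0) (hz : z ∈ Algebra.adjoin R {x}) :
    ∃ d₀ d₁ : R, z = algebraMap R A d₀ + algebraMap R A d₁ * x := by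
  rw [Algebra.adjoin_singleton_eq_range_aeval] at hz
  obtain ⟨f, rfl⟩ := hz
  have hp1 : p ≠ 1 := fun h => by simp [h] at hdeg
  have hlt := natDegree_modByMonic_lt f hp hp1
  rw [hdeg] at hlt
  refine ⟨(f %ₘ p).coeff 0, (f %ₘ p).coeff 1, ?_⟩
  rw [AlgHom.toRingHom_eq_coe, RingHom.coe_coe, ← aeval_modByMonic_eq_self_of_root hpx]
  nth_rw 1 [eq_X_add_C_of_natDegree_le_one (Nat.lt_succ_iff.mp hlt)]
  simp only [map_add, map_mul, aeval_C, aeval_X]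
  ring

theorem natDegree_minpoly_eq_finrank_adjoin {O K Ω : Type*} [CommRing O] [IsDomain O]
    [IsIntegrallyClosed O] [Field K] [Algebra O K] [IsFractionRing O K] [Field Ω]
    [Algebra K Ω] [Algebra O Ω] [IsScalarTower O K Ω] {r : Ω} (hr : IsIntegral O r) :
    (minpoly O r).natDegree = Module.finrank K K⟮r⟯ := by
  rw [adjoin.finrank hr.tower_top, minpoly.isIntegrallyClosed_eq_field_fractions' K hr,
    natDegree_map_eq_of_injective (IsFractionRing.injective O K)]

theorem finrank_adjoin_eq_one_of_algebraMap_mul_eq {O K Ω : Type*} [CommRing O] [Field K]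
    [Algebra O K] [IsFractionRing O K] [Field Ω] [Algebra K Ω] [Algebra O Ω]
    [IsScalarTower O K Ω] {r : Ω} {u v : O} (hu : u ≠ 0)
    (h : algebraMap O Ω u * r = algebraMap O Ω v) :
    Module.finrank K K⟮r⟯ = 1 := by
  have hu' : algebraMap O Ω u ≠ 0 := by
    rw [IsScalarTower.algebraMap_apply O K Ω]
    exact (_root_.map_ne_zero _).mpr ((map_ne_zero_iff _ (IsFractionRing.injective O K)).mpr hu)
  have hr : r = algebraMap K Ω (algebraMap O K v / algebraMap O K u) := by
    rw [map_div₀, ← IsScalarTower.algebraMap_apply, ← IsScalarTower.algebraMap_apply,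
      eq_div_iff hu', mul_comm, h]
  rw [adjoin_simple_eq_bot_iff.mpr (mem_bot.mpr ⟨_, hr.symm⟩), IntermediateField.finrank_bot]

theorem stmt_9_general (O : Type*) [CommRing O] [IsDomain O] [IsIntegrallyClosed O]
    (K : Type*) [Field K] [Algebra O K] [IsFractionRing O K]
    (Ω : Type*) [Field Ω] [Algebra K Ω] [Algebra O Ω] [IsScalarTower O K Ω]
    (r : Ω) (hr : IsIntegral O r)
    (hdeg : Module.finrank K (IntermediateField.adjoin K {r}) = 2)
    (q : Ω)
    (hadj : Algebra.adjoin O {q} = Algebra.adjoin O {r})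
    (a₀ a₁ : O) (hcoord : q = algebraMap O Ω a₀ + algebraMap O Ω a₁ * r) :
    IsUnit a₁ := by
  have hrq : r ∈ Algebra.adjoin O {q} := hadj ▸ Algebra.self_mem_adjoin_singleton O r
  rw [hcoord] at hrq
  obtain ⟨c, z, hz, hrz⟩ := exists_eq_algebraMap_add_mul_of_mem_adjoin_add_mul a₀ a₁ hrq
  obtain ⟨d₀, d₁, rfl⟩ := exists_eq_algebraMap_add_mul_of_mem_adjoin (minpoly.monic hr)
    (by rw [natDegree_minpoly_eq_finrank_adjoin (K := K) hr, hdeg]) (minpoly.aeval O r) hz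
  have hlin : algebraMap O Ω (1 - a₁ * d₁) * r = algebraMap O Ω (c + a₁ * d₀) := by
    simp only [map_sub, map_add, map_mul, map_one]
    linear_combination hrz
  have hunit : 1 - a₁ * d₁ = 0 := by
    by_contra hu
    have hone := finrank_adjoin_eq_one_of_algebraMap_mul_eq (K := K) hu hlin
    omega
  exact IsUnit.of_mul_eq_one d₁ (sub_eq_zero.mp hunit).symm

theorem stmt_9 (O : Type*) [CommRing O] [IsDomain O] [CharZero O] [IsIntegrallyClosed O]
    (K : Type*) [Field K] [Algebra O K] [IsFractionRing O K]
    (Ω : Type*) [Field Ω] [IsAlgClosed Ω] [Algebra K Ω] [Algebra O Ω] [IsScalarTower O K Ω]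
    (r : Ω) (hr : IsIntegral O r)
    (hdeg : Module.finrank K (IntermediateField.adjoin K {r}) = 2)
    (q : Ω) (hq : IsIntegral O q)
    (hadj : Algebra.adjoin O {q} = Algebra.adjoin O {r})
    (a₀ a₁ : O) (hcoord : q = algebraMap O Ω a₀ + algebraMap O Ω a₁ * r) :
    IsUnit a₁ :=
  stmt_9_general O K Ω r hr hdeg q hadj a₀ a₁ hcoord
end

section
/- Let L/K be a finite Galois extension with only s roots of unity in L*, and let q ∈ L with q ∉ K. Define Q to be the smallest positive integer such that K(q^Q) ⊆ K(q^n) for every positive integer n; then Q ≤ s. -/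
/-!
By minimality of `Q` it suffices that `K(q^s) ⊆ K(q^n)` for every `n ≥ 1`. If an automorphism
`σ` of `L/K` fixes `q^n`, then `σ(q)/q` is a root of unity; the roots of unity of `L` form a group
of order `s`, so `(σ(q)/q)^s = 1` and `σ` fixes `q^s`. By the Galois correspondence,
`q^s ∈ K(q^n)`.
-/

theorem ncard_setOf_isOfFinOrder_pos {M : Type*} [Monoid M]
    (hfin : {x : M | IsOfFinOrder x}.Finite) : 0 < {x : M | IsOfFinOrder x}.ncard :=
  (Set.ncard_pos hfin).mpr ⟨1, IsOfFinOrder.one⟩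

theorem pow_ncard_setOf_isOfFinOrder_eq_one {M : Type*} [CommMonoid M]
    (hfin : {x : M | IsOfFinOrder x}.Finite) {ζ : M} (hζ : IsOfFinOrder ζ) :
    ζ ^ {x : M | IsOfFinOrder x}.ncard = 1 := by
  -- The torsion submonoid is a finite group, so Lagrange's theorem applies in it.
  let _ := (CommMonoid.torsion.isMulTorsion (G := M)).group
  have : Finite (CommMonoid.torsion M) := hfin
  have h : (⟨ζ, hζ⟩ : CommMonoid.torsion M) ^ Nat.card (CommMonoid.torsion M) = 1 :=
    pow_card_eq_one'
  exact congrArg Subtype.val h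

theorem pow_ncard_setOf_isOfFinOrder_eq_pow {G : Type*} [CommGroupWithZero G]
    (hfin : {x : G | IsOfFinOrder x}.Finite) {x y : G} {n : ℕ} (hn : n ≠ 0)
    (hxy : x ^ n = y ^ n) :
    x ^ {x : G | IsOfFinOrder x}.ncard = y ^ {x : G | IsOfFinOrder x}.ncard := by
  rcases eq_or_ne y 0 with rfl | hy
  · obtain rfl : x = 0 := (pow_eq_zero_iff hn).mp (hxy.trans (zero_pow hn))
    rfl
  · have hxy_root : IsOfFinOrder (x / y) := isOfFinOrder_iff_pow_eq_one.mpr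
      ⟨n, Nat.pos_of_ne_zero hn, by rw [div_pow, hxy, div_self (pow_ne_zero n hy)]⟩
    have := pow_ncard_setOf_isOfFinOrder_eq_one hfin hxy_root
    rwa [div_pow, div_eq_one_iff_eq (pow_ne_zero _ hy)] at this

theorem mem_adjoin_simple_of_forall_algEquiv {K L : Type*} [Field K] [Field L] [Algebra K L]
    [IsGalois K L] {x y : L} (h : ∀ σ : L ≃ₐ[K] L, σ x = x → σ y = y) :
    y ∈ IntermediateField.adjoin K {x} := by
  rw [← InfiniteGalois.fixedField_fixingSubgroup (IntermediateField.adjoin K {x}),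
    IntermediateField.mem_fixedField_iff]
  intro σ hσ
  exact h σ (hσ ⟨x, IntermediateField.mem_adjoin_simple_self K x⟩)

theorem stmt_11_general (K L : Type*) [Field K] [Field L] [Algebra K L]
    [IsGalois K L]
    (s : ℕ) (hfin : {x : L | ∃ n : ℕ, 0 < n ∧ x ^ n = 1}.Finite)
    (hcard : {x : L | ∃ n : ℕ, 0 < n ∧ x ^ n = 1}.ncard = s)
    (q : L)
    (Q : ℕ)
    (hleast : ∀ Q' : ℕ, 0 < Q' →
      (∀ n : ℕ, 0 < n →
        IntermediateField.adjoin K {q ^ Q'} ≤ IntermediateField.adjoin K {q ^ n}) →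
      Q ≤ Q') :
    Q ≤ s := by
  have hroots : {x : L | ∃ n : ℕ, 0 < n ∧ x ^ n = 1} = {x | IsOfFinOrder x} :=
    Set.ext fun _ => isOfFinOrder_iff_pow_eq_one.symm
  rw [hroots] at hfin hcard
  subst hcard
  refine hleast _ (ncard_setOf_isOfFinOrder_pos hfin) fun n hn => ?_
  rw [IntermediateField.adjoin_simple_le_iff]
  refine mem_adjoin_simple_of_forall_algEquiv fun σ hσ => ?_
  rw [map_pow] at hσ ⊢
  exact pow_ncard_setOf_isOfFinOrder_eq_pow hfin hn.ne' hσ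

theorem stmt_11 (K L : Type*) [Field K] [CharZero K] [Field L] [Algebra K L]
    [FiniteDimensional K L] [IsGalois K L]
    (s : ℕ) (hfin : {x : L | ∃ n : ℕ, 0 < n ∧ x ^ n = 1}.Finite)
    (hcard : {x : L | ∃ n : ℕ, 0 < n ∧ x ^ n = 1}.ncard = s)
    (q : L) (hq : q ∉ Set.range (algebraMap K L))
    (Q : ℕ) (hQ : 0 < Q)
    (hsub : ∀ n : ℕ, 0 < n →
      IntermediateField.adjoin K {q ^ Q} ≤ IntermediateField.adjoin K {q ^ n})
    (hleast : ∀ Q' : ℕ, 0 < Q' →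
      (∀ n : ℕ, 0 < n →
        IntermediateField.adjoin K {q ^ Q'} ≤ IntermediateField.adjoin K {q ^ n}) →
      Q ≤ Q') :
    Q ≤ s :=
  stmt_11_general K L s hfin hcard q Q hleast
end

section
/- Let E be a field of characteristic zero and r algebraic over E of degree d' ≥ 2 with distinct E-embeddings η₀ = id, η₁, ..., η_{d'-1} into an algebraic closure. The (d'-1)×(d'-1) matrix C whose (i,j)-entry is r^j - ηᵢ(r^j) (for 1 ≤ i, j ≤ d'-1) is invertible. -/
/-!
An `E`-embedding of `E(r)` is determined by the image of `r`, so the values `ηᵢ(r)` are distinct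
and their Vandermonde matrix is invertible. Subtracting its row `0` (the row of `r`) from the
other rows and expanding along the first column leaves exactly `-C`.
-/

namespace Matrix

variable {R : Type*} [CommRing R] {n : ℕ}

theorem det_eq_mul_det_submatrix_succ_of_column_zero (A : Matrix (Fin (n + 1)) (Fin (n + 1)) R)
    (hA : ∀ i : Fin n, A i.succ 0 = 0) : A.det = A 0 0 * (A.submatrix Fin.succ Fin.succ).det := by
  rw [det_succ_column_zero, Fin.sum_univ_succ, Fintype.sum_eq_zero _ fun i => by simp [hA]]
  simp

theorem det_vandermonde_eq_det_pow_sub_pow (v : Fin (n + 1) → R) :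
    (vandermonde v).det =
      (of fun i j : Fin n => v i.succ ^ (j.succ : ℕ) - v 0 ^ (j.succ : ℕ)).det := by
  set c : Fin (n + 1) → R := Fin.cons 0 fun _ => -1
  set N : Matrix (Fin (n + 1)) (Fin (n + 1)) R :=
    of fun i j => vandermonde v i j + c i * vandermonde v 0 j
  have hN : N.det = (vandermonde v).det :=
    det_eq_of_forall_row_eq_smul_add_const c 0 rfl fun _ _ => rfl
  have hsub : N.submatrix Fin.succ Fin.succ =
      of fun i j : Fin n => v i.succ ^ (j.succ : ℕ) - v 0 ^ (j.succ : ℕ) := by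
    ext i j
    simp [N, c, sub_eq_add_neg]
  rw [← hN, det_eq_mul_det_submatrix_succ_of_column_zero N fun i => by simp [N, c], hsub]
  simp [N, c]

theorem isUnit_det_pow_sub_pow_of_injective {K : Type*} [Field K] {v : Fin (n + 1) → K}
    (hv : Function.Injective v) :
    IsUnit (of fun i j : Fin n => v 0 ^ (j.succ : ℕ) - v i.succ ^ (j.succ : ℕ)).det := by
  have hneg : (of fun i j : Fin n => v 0 ^ (j.succ : ℕ) - v i.succ ^ (j.succ : ℕ)) =
      -of fun i j : Fin n => v i.succ ^ (j.succ : ℕ) - v 0 ^ (j.succ : ℕ) := by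
    ext; simp
  rw [hneg, det_neg, ← det_vandermonde_eq_det_pow_sub_pow, isUnit_iff_ne_zero]
  exact mul_ne_zero (pow_ne_zero _ (neg_ne_zero.mpr one_ne_zero))
    (det_vandermonde_ne_zero_iff.mpr hv)

end Matrix

theorem stmt_14 (E : Type*) [Field E]
    (Ω : Type*) [Field Ω] [Algebra E Ω]
    (r : Ω) (d : ℕ) (hd : 2 ≤ d)
    (η : Fin d → ((IntermediateField.adjoin E {r}) →ₐ[E] Ω))
    (hinj : Function.Injective η)
    (h0 : η ⟨0, by omega⟩ = (IntermediateField.adjoin E {r}).val) :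
    IsUnit (Matrix.det (Matrix.of (fun (i j : {i : Fin d // (i : ℕ) ≠ 0}) =>
      r ^ (j.1 : ℕ) - η i.1 (IntermediateField.AdjoinSimple.gen E r ^ (j.1 : ℕ))))) := by
  obtain ⟨n, rfl⟩ : ∃ n, d = n + 1 := ⟨d - 1, by omega⟩
  set v : Fin (n + 1) → Ω := fun i => η i (IntermediateField.AdjoinSimple.gen E r)
  have hv : Function.Injective v := fun i j hij =>
    hinj <| IntermediateField.adjoin_algHom_ext E fun x hx => by
      obtain rfl := Set.mem_singleton_iff.mp hx
      exact hij
  have hv0 : v 0 = r :=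
    (DFunLike.congr_fun h0 _).trans (IntermediateField.AdjoinSimple.coe_gen E r)
  let e : Fin n ≃ {i : Fin (n + 1) // (i : ℕ) ≠ 0} :=
    (finSuccAboveEquiv 0).trans (Equiv.subtypeEquivRight fun _ => Fin.val_ne_zero_iff.symm)
  rw [← Matrix.det_submatrix_equiv_self e]
  convert Matrix.isUnit_det_pow_sub_pow_of_injective hv using 2
  ext i j
  simp [e, v, hv0, finSuccAboveEquiv_apply]
end
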